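/- Every formula of the Russell-Prawitz fragment of second-order propositional logic is the Russell-Prawitz translation of some propositional formula with polynomial connectives: for every A in L²_RP (the language where every universal formula is universal polynomial) there exists B in Lᵖ (the propositional language with ⊃ and all polynomial connectives) with B* = A. -/

import Mathlib

inductive Ty : Type
  | var : ℕ → Ty
  | imp : Ty → Ty → Ty
  | all : Ty → Ty
deriving DecidableEq

namespace Ty

/-- Shift the type variables `≥ c` up by one. -/
def shiftAbove (c : ℕ) : Ty → Ty
  | var n => if n < c then var n else var (n + 1)
  | imp A B => imp (shiftAbove c A) (shiftAbove c B)
  | all A => all (shiftAbove (c + 1) A)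

/-- Shift all free type variables up by one. -/
def shift (A : Ty) : Ty := shiftAbove 0 A

/-- Substitute `B` for the type variable `c`. -/
def substAt (c : ℕ) (B : Ty) : Ty → Ty
  | var n => if n < c then var n else if n = c then (shift^[c]) B else var (n - 1)
  | imp A A' => imp (substAt c B A) (substAt c B A')
  | all A => all (substAt (c + 1) B A)

end Ty

/-- Propositional formulas with polynomial connectives: a polynomial
connective applied to arguments is recorded by the family of lists of
premisses of its introduction rules, i.e. `poly [l₁,…,l_K]` stands for
`†⟨Aᵢ⟩` where the `k`-th introduction rule has premisses `l_k`. -/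
inductive PF : Type
  | var : ℕ → PF
  | imp : PF → PF → PF
  | poly : List (List PF) → PF

/-- `spine [l₁,…,l_K] = (l₁ ⊃ X) ⊃ ⋯ ⊃ (l_K ⊃ X) ⊃ X`, where
`l ⊃ X = A₁ ⊃ ⋯ ⊃ Aₘ ⊃ X` and `X` is the de Bruijn variable `0`. -/
def spine (lss : List (List Ty)) : Ty :=
  lss.foldr (fun l acc => .imp (l.foldr (fun A acc2 => .imp A acc2) (.var 0)) acc)
    (.var 0)

/-- The Russell-Prawitz translation of propositional formulas:
`(†⟨Aᵢ⟩)* = ∀X.⟨⟨A*⟩⊃X⟩⊃X`. -/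
def rp : PF → Ty
  | .var n => .var n
  | .imp a b => .imp (rp a) (rp b)
  | .poly lss =>
      .all (spine (lss.attach.map
        (fun l => l.1.attach.map (fun p => Ty.shift (rp p.1)))))
decreasing_by
  · simp_wf; omega
  · simp_wf
  · have h1 : sizeOf p.1 < sizeOf l.1 := List.sizeOf_lt_of_mem p.2
    have h2 : sizeOf l.1 < sizeOf lss := List.sizeOf_lt_of_mem l.2
    simp_wf
    omega

/-- Universal polynomial formulas of the Russell-Prawitz fragment `L²_RP`:
every universal formula has the form `∀X.⟨⟨B⟩⊃X⟩⊃X` with all components in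
`L²_RP` and `X` not free in them (in de Bruijn notation: the components
occur shifted under the binder). -/
inductive IsRP : Ty → Prop
  | var (n : ℕ) : IsRP (.var n)
  | imp {A B} : IsRP A → IsRP B → IsRP (.imp A B)
  | all (lss : List (List Ty)) : (∀ l ∈ lss, ∀ B ∈ l, IsRP B) →
      IsRP (.all (spine (lss.map (fun l => l.map Ty.shift))))

theorem rp_poly (lss : List (List PF)) :
    rp (.poly lss) = .all (spine (lss.map (List.map (Ty.shift ∘ rp)))) := by
  rw [rp]
  simp only [List.map_attach_eq_pmap, List.pmap_eq_map, Function.comp_def]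

/-- Every formula of the Russell-Prawitz fragment is the Russell-Prawitz
translation of some propositional formula with polynomial connectives. -/
theorem rp_surjective_on_RP_fragment (A : Ty) (h : IsRP A) :
    ∃ B : PF, rp B = A := by
  induction h with
  | var n => exact ⟨.var n, by rw [rp]⟩
  | imp _ _ ihA ihB =>
    obtain ⟨a, rfl⟩ := ihA
    obtain ⟨b, rfl⟩ := ihB
    exact ⟨.imp a b, by rw [rp]⟩
  | all lss _ ih =>
    obtain ⟨lss', rfl⟩ : lss ∈ Set.range (List.map (List.map rp)) := by
      simpa only [Set.range_list_map, Set.mem_ofPred_eq, Set.mem_range] using ih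
    exact ⟨.poly lss', by simp only [rp_poly, List.map_map, Function.comp_def]⟩
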